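/- Let g be a symmetric (0,2)-tensor field on (0,∞)×(0,2π)×(0,π) (spherical coordinates) satisfying the Killing equations ∂_ξ g = 0 for all three rotation generators ξ = ∂/∂φ, ζ = −sin φ ∂/∂ϑ − cot ϑ cos φ ∂/∂φ, λ = cos φ ∂/∂ϑ − cot ϑ sin φ ∂/∂φ. Then there exist functions P, Q of r alone such that g = P(r) dr⊗dr + Q(r)(dϑ⊗dϑ + sin²ϑ dφ⊗dφ); in particular g_{rφ} = g_{rϑ} = g_{φϑ} = 0, g_{rr} = P(r), g_{ϑϑ} = Q(r), and g_{φφ} = Q(r) sin²ϑ. -/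

import Mathlib

open scoped BigOperators

/-- Partial derivative of a real function on `ℝ³` in the `j`-th coordinate direction. -/
noncomputable def pd (f : (Fin 3 → ℝ) → ℝ) (j : Fin 3) (x : Fin 3 → ℝ) : ℝ :=
  fderiv ℝ f x (Pi.single j 1)

/-- The open box `(0,∞) × (0,2π) × (0,π)` in `(r, φ, ϑ)`-space. -/
def sphDom : Set (Fin 3 → ℝ) :=
  {p | 0 < p 0 ∧ p 1 ∈ Set.Ioo 0 (2 * Real.pi) ∧ p 2 ∈ Set.Ioo 0 Real.pi}

/-- The Killing equation for a vector field `ξ` and a `(0,2)`-tensor `G` on `sphDom`. -/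
def KillingEq (G : (Fin 3 → ℝ) → Matrix (Fin 3) (Fin 3) ℝ)
    (ξ : (Fin 3 → ℝ) → (Fin 3 → ℝ)) : Prop :=
  ∀ p ∈ sphDom, ∀ k l : Fin 3,
    (∑ m, pd (fun q => G q k l) m p * ξ p m)
      + (∑ i, G p i l * pd (fun q => ξ q i) k p)
      + (∑ j, G p k j * pd (fun q => ξ q j) l p) = 0

/-! The Killing operator at a point is linear in the 1-jet of the vector field. Invariance under
`∂/∂φ` makes every component of `g` independent of `φ`. At a point of azimuth `φ`, the 1-jets of
`cos φ • ζ + sin φ • λ` and `-sin φ • ζ + cos φ • λ` (coefficients frozen at that point) no longer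
involve `φ`, and their Killing equations read off `g_{rφ} = g_{rϑ} = g_{φϑ} = 0`,
`g_{φφ} = sin² ϑ g_{ϑϑ}` and `∂_ϑ g_{rr} = ∂_ϑ g_{ϑϑ} = 0`. Hence `g_{rr}` and `g_{ϑϑ}` depend
on `r` alone, by the mean value theorem on the convex domain. -/

open Real Matrix

theorem Convex.apply_eq_of_fderiv_apply_sub_eq_zero {E F : Type*} [NormedAddCommGroup E]
    [NormedSpace ℝ E] [NormedAddCommGroup F] [NormedSpace ℝ F] {s : Set E} (hs : Convex ℝ s)
    {f : E → F} (hf : ∀ z ∈ s, DifferentiableAt ℝ f z) {x y : E} (hx : x ∈ s) (hy : y ∈ s)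
    (h : ∀ z ∈ s, fderiv ℝ f z (y - x) = 0) : f x = f y := by
  have segm : Set.MapsTo (AffineMap.lineMap x y : ℝ → E) (Set.Icc 0 1) s :=
    hs.mapsTo_lineMap hx hy
  have hD : ∀ t ∈ Set.Icc (0 : ℝ) 1, HasDerivWithinAt (f ∘ AffineMap.lineMap x y)
      (fderiv ℝ f (AffineMap.lineMap x y t) (y - x)) (Set.Icc 0 1) t := fun t ht =>
    (hf _ (segm ht)).hasFDerivAt.comp_hasDerivWithinAt t AffineMap.hasDerivWithinAt_lineMap
  have hle := norm_image_sub_le_of_norm_deriv_le_segment_01' hD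
    (C := 0) (fun t ht => by rw [h _ (segm (Set.Ico_subset_Icc_self ht)), norm_zero])
  simpa [sub_eq_zero, eq_comm] using hle

theorem convex_sphDom : Convex ℝ sphDom :=
  ((convex_Ioi 0).is_linear_preimage (LinearMap.proj 0).isLinear).inter <|
    ((convex_Ioo _ _).is_linear_preimage (LinearMap.proj 1).isLinear).inter
      ((convex_Ioo _ _).is_linear_preimage (LinearMap.proj 2).isLinear)

theorem eq_of_pd_one_eq_zero_of_pd_two_eq_zero {a : (Fin 3 → ℝ) → ℝ}
    (ha : ∀ p ∈ sphDom, DifferentiableAt ℝ a p) (h₁ : ∀ p ∈ sphDom, pd a 1 p = 0)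
    (h₂ : ∀ p ∈ sphDom, pd a 2 p = 0) {p q : Fin 3 → ℝ} (hp : p ∈ sphDom) (hq : q ∈ sphDom)
    (h₀ : p 0 = q 0) : a p = a q := by
  refine convex_sphDom.apply_eq_of_fderiv_apply_sub_eq_zero ha hp hq fun z hz => ?_
  have hdir : q - p = (q 1 - p 1) • Pi.single 1 1 + (q 2 - p 2) • Pi.single 2 1 := by
    ext i; fin_cases i <;> simp [h₀]
  rw [hdir, map_add, map_smul, map_smul, show fderiv ℝ a z (Pi.single 1 1) = 0 from h₁ z hz,
    show fderiv ℝ a z (Pi.single 2 1) = 0 from h₂ z hz, smul_zero, smul_zero, add_zero]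

section KillingOperator

variable {ι : Type*} [Fintype ι]

/-- `dg m = ∂ₘ g`, and `(v, J)` is the 1-jet of the vector field: `J i k = ∂ₖ vⁱ`. -/
def killingOp (g : Matrix ι ι ℝ) (dg : ι → Matrix ι ι ℝ) (v : ι → ℝ) (J : Matrix ι ι ℝ) :
    Matrix ι ι ℝ :=
  ∑ m, v m • dg m + Jᵀ * g + g * J

theorem killingOp_add_smul (g : Matrix ι ι ℝ) (dg : ι → Matrix ι ι ℝ) (a b : ℝ) (v w : ι → ℝ)
    (J L : Matrix ι ι ℝ) :
    killingOp g dg (a • v + b • w) (a • J + b • L)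
      = a • killingOp g dg v J + b • killingOp g dg w L := by
  simp only [killingOp, Pi.add_apply, Pi.smul_apply, smul_eq_mul, add_smul, mul_smul,
    Finset.sum_add_distrib, ← Finset.smul_sum, transpose_add, transpose_smul, add_mul, mul_add,
    Matrix.smul_mul, Matrix.mul_smul, smul_add]
  abel

theorem killingOp_single_zero [DecidableEq ι] (g : Matrix ι ι ℝ) (dg : ι → Matrix ι ι ℝ)
    (j : ι) : killingOp g dg (Pi.single j 1) 0 = dg j := by
  simp [killingOp, Pi.single_apply]

end KillingOperator

noncomputable def jac (ξ : (Fin 3 → ℝ) → Fin 3 → ℝ) (p : Fin 3 → ℝ) : Matrix (Fin 3) (Fin 3) ℝ :=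
  Matrix.of fun i k => pd (fun q => ξ q i) k p

noncomputable def gradTensor (G : (Fin 3 → ℝ) → Matrix (Fin 3) (Fin 3) ℝ) (p : Fin 3 → ℝ) :
    Fin 3 → Matrix (Fin 3) (Fin 3) ℝ :=
  fun m => Matrix.of fun k l => pd (fun q => G q k l) m p

theorem killingEq_iff {G : (Fin 3 → ℝ) → Matrix (Fin 3) (Fin 3) ℝ}
    {ξ : (Fin 3 → ℝ) → Fin 3 → ℝ} :
    KillingEq G ξ ↔ ∀ p ∈ sphDom, killingOp (G p) (gradTensor G p) (ξ p) (jac ξ p) = 0 := by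
  refine forall₂_congr fun p _ => ?_
  simp only [← Matrix.ext_iff, killingOp, Matrix.add_apply, Matrix.sum_apply, Matrix.smul_apply,
    mul_apply, transpose_apply, gradTensor, jac, of_apply, Matrix.zero_apply, smul_eq_mul]
  simp only [mul_comm]

theorem jac_const (c : Fin 3 → ℝ) (p : Fin 3 → ℝ) : jac (fun _ => c) p = 0 := by
  ext i k
  simp [jac, pd]

theorem jac_eq_of_hasDerivAt {f u v : ℝ → ℝ} {f' u' v' : ℝ} {p : Fin 3 → ℝ}
    (hf : HasDerivAt f f' (p 2)) (hu : HasDerivAt u u' (p 1)) (hv : HasDerivAt v v' (p 1)) :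
    jac (fun q => ![0, f (q 2) * u (q 1), v (q 1)]) p
      = !![0, 0, 0; 0, f (p 2) * u', u (p 1) * f'; 0, v', 0] := by
  have hproj (j : Fin 3) :=
    (ContinuousLinearMap.proj (R := ℝ) (φ := fun _ : Fin 3 => ℝ) j).hasFDerivAt (x := p)
  have h₁ : HasFDerivAt (fun q : Fin 3 → ℝ => f (q 2) * u (q 1)) _ p :=
    (hf.comp_hasFDerivAt p (hproj 2)).mul (hu.comp_hasFDerivAt p (hproj 1))
  have h₂ : HasFDerivAt (fun q : Fin 3 → ℝ => v (q 1)) _ p := hv.comp_hasFDerivAt p (hproj 1)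
  ext i k
  fin_cases i <;> fin_cases k <;> simp [jac, pd, h₁.fderiv, h₂.fderiv]

theorem hasDerivAt_neg_cot {x : ℝ} (hx : sin x ≠ 0) :
    HasDerivAt (fun y => -(cos y / sin y)) (1 / sin x ^ 2) x := by
  refine ((hasDerivAt_cos x).div (hasDerivAt_sin x) hx).neg.congr_deriv ?_
  field_simp
  linear_combination sin_sq_add_cos_sq x

section Jets

variable {g : Matrix (Fin 3) (Fin 3) ℝ} {dg : Fin 3 → Matrix (Fin 3) (Fin 3) ℝ}

theorem killingOp_eq_zero_of_rotation_pair {f f' c s : ℝ} (hcs : c ^ 2 + s ^ 2 = 1)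
    (hζ : killingOp g dg ![0, f * c, -s] !![0, 0, 0; 0, f * -s, c * f'; 0, -c, 0] = 0)
    (hl : killingOp g dg ![0, f * s, c] !![0, 0, 0; 0, f * c, s * f'; 0, -s, 0] = 0) :
    killingOp g dg ![0, f, 0] !![0, 0, 0; 0, 0, f'; 0, -1, 0] = 0 ∧
      killingOp g dg ![0, 0, 1] !![0, 0, 0; 0, f, 0; 0, 0, 0] = 0 := by
  have hpair (a b : ℝ) : killingOp g dg (a • ![0, f * c, -s] + b • ![0, f * s, c])
      (a • !![0, 0, 0; 0, f * -s, c * f'; 0, -c, 0]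
        + b • !![0, 0, 0; 0, f * c, s * f'; 0, -s, 0]) = 0 := by
    rw [killingOp_add_smul, hζ, hl, smul_zero, smul_zero, add_zero]
  constructor
  · convert hpair c s using 2
    · ext i; fin_cases i <;> simp <;> grind
    · ext i j; fin_cases i <;> fin_cases j <;> simp <;> grind
  · convert hpair (-s) c using 2
    · ext i; fin_cases i <;> simp <;> grind
    · ext i j; fin_cases i <;> fin_cases j <;> simp <;> grind

theorem entries_eq_of_killingOp_eq_zero {f f' : ℝ} (hg : g.IsSymm) (hdg : dg 1 = 0) (hf' : f' ≠ 0)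
    (h : killingOp g dg ![0, f, 0] !![0, 0, 0; 0, 0, f'; 0, -1, 0] = 0) :
    g 0 1 = 0 ∧ g 0 2 = 0 ∧ g 1 2 = 0 ∧ g 1 1 * f' = g 2 2 := by
  have entry (k l : Fin 3) := congrFun (congrFun h k) l
  have h₀₁ := entry 0 1
  have h₀₂ := entry 0 2
  have h₁₁ := entry 1 1
  have h₁₂ := entry 1 2
  simp [killingOp, hdg, mul_apply, Fin.sum_univ_three, hg.apply 1 2] at h₀₁ h₀₂ h₁₁ h₁₂
  exact ⟨h₀₂.resolve_right hf', h₀₁, h₁₁, by linarith⟩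

theorem dg_two_diag_eq_zero_of_killingOp_eq_zero {f : ℝ}
    (h : killingOp g dg ![0, 0, 1] !![0, 0, 0; 0, f, 0; 0, 0, 0] = 0) :
    dg 2 0 0 = 0 ∧ dg 2 2 2 = 0 := by
  have entry (k l : Fin 3) := congrFun (congrFun h k) l
  have h₀₀ := entry 0 0
  have h₂₂ := entry 2 2
  simp [killingOp, mul_apply, Fin.sum_univ_three] at h₀₀ h₂₂
  exact ⟨h₀₀, h₂₂⟩

end Jets

theorem gradTensor_eq_zero_of_killingEq_single {G : (Fin 3 → ℝ) → Matrix (Fin 3) (Fin 3) ℝ}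
    {j : Fin 3} (h : KillingEq G fun _ => Pi.single j 1) {p : Fin 3 → ℝ} (hp : p ∈ sphDom) :
    gradTensor G p j = 0 := by
  simpa only [jac_const, killingOp_single_zero] using killingEq_iff.1 h p hp

theorem tensor_entries_of_killingEq_rotations {G : (Fin 3 → ℝ) → Matrix (Fin 3) (Fin 3) ℝ}
    {p : Fin 3 → ℝ} (hp : p ∈ sphDom) (hsymm : (G p).IsSymm) (hφ : gradTensor G p 1 = 0)
    (hζ : KillingEq G fun p =>
      ![0, -(Real.cos (p 2) / Real.sin (p 2)) * Real.cos (p 1), -Real.sin (p 1)])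
    (hlam : KillingEq G fun p =>
      ![0, -(Real.cos (p 2) / Real.sin (p 2)) * Real.sin (p 1), Real.cos (p 1)]) :
    G p 0 1 = 0 ∧ G p 0 2 = 0 ∧ G p 1 2 = 0 ∧ G p 1 1 = G p 2 2 * sin (p 2) ^ 2 ∧
      gradTensor G p 2 0 0 = 0 ∧ gradTensor G p 2 2 2 = 0 := by
  have hs : sin (p 2) ≠ 0 := (sin_pos_of_pos_of_lt_pi hp.2.2.1 hp.2.2.2).ne'
  have hcot := hasDerivAt_neg_cot hs
  have Kζ := killingEq_iff.1 hζ p hp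
  have Kl := killingEq_iff.1 hlam p hp
  rw [jac_eq_of_hasDerivAt (v := fun x => -sin x) hcot (hasDerivAt_cos _)
    (hasDerivAt_sin _).neg] at Kζ
  rw [jac_eq_of_hasDerivAt hcot (hasDerivAt_sin _) (hasDerivAt_cos _)] at Kl
  obtain ⟨K₁, K₂⟩ := killingOp_eq_zero_of_rotation_pair (cos_sq_add_sin_sq (p 1)) Kζ Kl
  obtain ⟨h₀₁, h₀₂, h₁₂, h₁₁⟩ :=
    entries_eq_of_killingOp_eq_zero hsymm hφ (by positivity) K₁
  refine ⟨h₀₁, h₀₂, h₁₂, ?_, dg_two_diag_eq_zero_of_killingOp_eq_zero K₂⟩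
  rw [← h₁₁]
  field_simp

/-- a symmetric `(0,2)`-tensor field on `(0,∞)×(0,2π)×(0,π)` (spherical
coordinates `(r,φ,ϑ)`) satisfying the Killing equations for all three rotation generators
`ξ = ∂/∂φ`, `ζ = −sin φ ∂/∂ϑ − cot ϑ cos φ ∂/∂φ`, `λ = cos φ ∂/∂ϑ − cot ϑ sin φ ∂/∂φ`
has the form `g = P(r) dr⊗dr + Q(r)(dϑ⊗dϑ + sin²ϑ dφ⊗dφ)`. -/
theorem rotation_invariant_tensor_form
    (G : (Fin 3 → ℝ) → Matrix (Fin 3) (Fin 3) ℝ)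
    (hsymm : ∀ p ∈ sphDom, ∀ k l : Fin 3, G p k l = G p l k)
    (hdiff : ∀ k l, ∀ p ∈ sphDom, DifferentiableAt ℝ (fun q => G q k l) p)
    (hξ : KillingEq G fun _ => ![0, 1, 0])
    (hζ : KillingEq G fun p =>
      ![0, -(Real.cos (p 2) / Real.sin (p 2)) * Real.cos (p 1), -Real.sin (p 1)])
    (hlam : KillingEq G fun p =>
      ![0, -(Real.cos (p 2) / Real.sin (p 2)) * Real.sin (p 1), Real.cos (p 1)]) :
    ∃ P Q : ℝ → ℝ, ∀ p ∈ sphDom,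
      G p 0 0 = P (p 0) ∧
      G p 2 2 = Q (p 0) ∧
      G p 1 1 = Q (p 0) * Real.sin (p 2) ^ 2 ∧
      G p 0 1 = 0 ∧ G p 0 2 = 0 ∧ G p 1 2 = 0 := by
  rw [show (![0, 1, 0] : Fin 3 → ℝ) = Pi.single 1 1 by ext i; fin_cases i <;> simp] at hξ
  have hφ (p) (hp : p ∈ sphDom) := gradTensor_eq_zero_of_killingEq_single hξ hp
  have hrot (p) (hp : p ∈ sphDom) := tensor_entries_of_killingEq_rotations hp
    (Matrix.IsSymm.ext fun k l => hsymm p hp l k) (hφ p hp) hζ hlam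
  have hslice {k : Fin 3} (hk : ∀ p ∈ sphDom, gradTensor G p 2 k k = 0) {p q : Fin 3 → ℝ}
      (hp : p ∈ sphDom) (hq : q ∈ sphDom) (h₀ : p 0 = q 0) : G p k k = G q k k :=
    eq_of_pd_one_eq_zero_of_pd_two_eq_zero (hdiff k k) (fun p hp => congrFun₂ (hφ p hp) k k)
      hk hp hq h₀
  let base (r : ℝ) : Fin 3 → ℝ := ![r, π, π / 2]
  have hbase {r : ℝ} (hr : 0 < r) : base r ∈ sphDom := by
    refine ⟨hr, ⟨pi_pos, ?_⟩, ?_, ?_⟩ <;> simp [base] <;> linarith [pi_pos]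
  refine ⟨fun r => G (base r) 0 0, fun r => G (base r) 2 2, fun p hp => ?_⟩
  obtain ⟨h₀₁, h₀₂, h₁₂, h₁₁, -, -⟩ := hrot p hp
  have h₀₀ := hslice (fun q hq => (hrot q hq).2.2.2.2.1) hp (hbase hp.1) rfl
  have h₂₂ := hslice (fun q hq => (hrot q hq).2.2.2.2.2) hp (hbase hp.1) rfl
  exact ⟨h₀₀, h₂₂, by rw [h₁₁, h₂₂], h₀₁, h₀₂, h₁₂⟩
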